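/- Let G be a compact abelian group with Haar measure μ_G, let K be a closed subgroup of G equipped with its own Haar measure μ_K (both normalized arbitrarily), and let Ω ⊆ G be a 0-symmetric open set. Then the Turán constants satisfy T_G(Ω) ≤ (μ_G(G)/μ_K(K)) · T_K(Ω ∩ K), where Ω ∩ K is regarded as a 0-symmetric open subset of the compact abelian group K. -/

import Mathlib

open MeasureTheory Complex
open scoped ENNReal ComplexOrder

/-- A function on an abelian group is positive definite. -/
def IsPosDefFn {G : Type*} [AddCommGroup G] (f : G → ℂ) : Prop :=
  ∀ (N : ℕ) (x : Fin N → G) (c : Fin N → ℂ),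
    0 ≤ ∑ n : Fin N, ∑ m : Fin N, c n * (starRingEnd ℂ) (c m) * f (x n - x m)

/-- The Turán constant of a set `Ω`: the supremum in `[0,∞]` of `Re (∫ f dμ) / f 0` over
nonzero continuous positive definite functions with support a compact subset of `Ω`. -/
noncomputable def turanConst {G : Type*} [AddCommGroup G] [TopologicalSpace G]
    [MeasurableSpace G] (μ : Measure G) (Ω : Set G) : ℝ≥0∞ :=
  sSup {r : ℝ≥0∞ | ∃ f : G → ℂ, Continuous f ∧ IsPosDefFn f ∧ f ≠ 0 ∧
    IsCompact (tsupport f) ∧ tsupport f ⊆ Ω ∧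
    r = ENNReal.ofReal ((∫ x, f x ∂μ).re / (f 0).re)}

/-!
The Haar measure `μ` of `G` minimises the energy `E(ν, ν) = ∫∫ Re f (x - y) dν(x) dν(y)` among
finite measures `ν` of given mass. Indeed `(a, b) ↦ E(aμ + bν, aμ + bν)` is a positive semidefinite
quadratic form, since its Riemann sums over finer and finer measurable partitions of the compact
group are exactly the sums in the definition of positive definiteness; at `(ν G, -μ G)` it gives
`(ν G)² ∫ Re f dμ ≤ μ G · E(ν, ν)`. For `ν` the Haar measure of `K` pushed to `G`, invariance gives
`E(ν, ν) = μK K · ∫ Re f dμK`, whence `μK K · ∫ Re f dμ ≤ μ G · ∫ Re f dμK`; and the restriction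
of an admissible `f` to `K` is admissible for `Ω ∩ K`, with the same value at `0`.
-/

open Set Filter Topology

namespace IsPosDefFn

variable {G : Type*} [AddCommGroup G] {f : G → ℂ}

theorem re_sum_nonneg (hf : IsPosDefFn f) {N : ℕ} (x : Fin N → G) (d : Fin N → ℝ) :
    0 ≤ ∑ i, ∑ j, d i * d j * (f (x i - x j)).re := by
  simpa [← ofReal_mul] using (le_def.1 (hf N x (fun n => (d n : ℂ)))).1

theorem re_zero_nonneg (hf : IsPosDefFn f) : 0 ≤ (f 0).re := by
  simpa using hf.re_sum_nonneg ![0] 1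

theorem re_neg (hf : IsPosDefFn f) (x : G) : (f (-x)).re = (f x).re := by
  have h0 : (f 0).im = 0 := by simpa [eq_comm] using (le_def.1 (hf 1 ![0] ![1])).2
  simpa [h0, Fin.sum_univ_two, neg_add_eq_zero, eq_comm] using (le_def.1 (hf 2 ![0, x] ![1, I])).2

theorem comp_addMonoidHom {H : Type*} [AddCommGroup H] (hf : IsPosDefFn f) (φ : H →+ G) :
    IsPosDefFn (f ∘ φ) := fun N x c => by
  simpa [map_sub] using hf N (φ ∘ x) c

end IsPosDefFn

theorem exists_measurable_fin_index_mem_of_isOpen {X : Type*} [TopologicalSpace X] [CompactSpace X]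
    [MeasurableSpace X] [OpensMeasurableSpace X] (U : X → Set X) (hU : ∀ x, IsOpen (U x))
    (hmem : ∀ x, x ∈ U x) :
    ∃ (N : ℕ) (t : Fin N → X) (π : X → Fin N), Measurable π ∧ ∀ x, x ∈ U (t (π x)) := by
  obtain ⟨s, hs⟩ := isCompact_univ.elim_finite_subcover U hU fun x _ => mem_iUnion.2 ⟨x, hmem x⟩
  let t : Fin s.card → X := fun n => s.equivFin.symm n
  have hcover : ∀ x, ∃ n, x ∈ disjointed (U ∘ t) n := fun x => by
    obtain ⟨i, hi, hx⟩ := mem_iUnion₂.1 (hs (mem_univ x))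
    rw [← mem_iUnion, iUnion_disjointed]
    exact mem_iUnion.2 ⟨s.equivFin ⟨i, hi⟩, by simpa [t] using hx⟩
  choose π hπ using hcover
  have hfiber : ∀ n, π ⁻¹' {n} = disjointed (U ∘ t) n := fun n => by
    ext x
    refine ⟨fun h => h ▸ hπ x, fun hx => ?_⟩
    by_contra hne
    exact disjoint_left.1 (disjoint_disjointed _ hne) (hπ x) hx
  refine ⟨s.card, t, π, measurable_to_countable' fun n => ?_,
    fun x => disjointed_subset (U ∘ t) _ (hπ x)⟩
  rw [hfiber, disjointed_eq_inter_compl]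
  exact (hU _).measurableSet.inter
    (MeasurableSet.iInter fun j => MeasurableSet.iInter fun _ => (hU _).measurableSet.compl)

theorem integral_comp_eq_sum {X ι : Type*} [MeasurableSpace X] [Fintype ι] [MeasurableSpace ι]
    [MeasurableSingletonClass ι] {σ : Measure X} [IsFiniteMeasure σ] {π : X → ι}
    (hπ : Measurable π) (F : ι → ℝ) :
    ∫ x, F (π x) ∂σ = ∑ i, σ.real (π ⁻¹' {i}) * F i := by
  rw [← integral_map hπ.aemeasurable (measurable_of_finite F).aestronglyMeasurable,
    integral_fintype Integrable.of_finite]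
  simp [map_measureReal_apply hπ (measurableSet_singleton _)]

theorem integral_integral_comp_eq_sum {X ι : Type*} [MeasurableSpace X] [Fintype ι]
    [MeasurableSpace ι] [MeasurableSingletonClass ι] {σ τ : Measure X} [IsFiniteMeasure σ]
    [IsFiniteMeasure τ] {π : X → ι} (hπ : Measurable π) (h : ι → ι → ℝ) :
    ∫ y, ∫ x, h (π x) (π y) ∂σ ∂τ =
      ∑ i, ∑ j, σ.real (π ⁻¹' {i}) * τ.real (π ⁻¹' {j}) * h i j := by
  have hinner : ∀ y, ∫ x, h (π x) (π y) ∂σ = ∑ i, σ.real (π ⁻¹' {i}) * h i (π y) :=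
    fun y => integral_comp_eq_sum hπ (fun i => h i (π y))
  simp_rw [hinner]
  rw [integral_comp_eq_sum hπ (fun j => ∑ i, σ.real (π ⁻¹' {i}) * h i j), Finset.sum_comm]
  simp only [Finset.mul_sum, mul_left_comm, mul_assoc]

noncomputable def mutualEnergy {G : Type*} [AddGroup G] [MeasurableSpace G] (g : G → ℝ)
    (σ τ : Measure G) : ℝ :=
  ∫ y, ∫ x, g (x - y) ∂σ ∂τ

theorem mutualEnergy_eq_of_isAddRightInvariant_left {G : Type*} [AddGroup G] [MeasurableSpace G]
    [MeasurableAdd G] (g : G → ℝ) (μ : Measure G) [μ.IsAddRightInvariant] (ν : Measure G)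
    [IsFiniteMeasure ν] :
    mutualEnergy g μ ν = ν.real univ * ∫ x, g x ∂μ := by
  simp_rw [mutualEnergy, integral_sub_right_eq_self, integral_const, smul_eq_mul]

theorem abs_quadratic_sub_le {p q r w p' q' r' w' s u ε : ℝ} (a b : ℝ)
    (hp : |p - p'| ≤ ε * s * s) (hq : |q - q'| ≤ ε * s * u) (hr : |r - r'| ≤ ε * u * s)
    (hw : |w - w'| ≤ ε * u * u) :
    |(a * a * p + a * b * (q + r) + b * b * w) - (a * a * p' + a * b * (q' + r') + b * b * w')| ≤
      ε * (|a| * s + |b| * u) ^ 2 :=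
  calc _ = |a * a * (p - p') + a * b * ((q - q') + (r - r')) + b * b * (w - w')| := by ring_nf
    _ ≤ |a * a * (p - p')| + |a * b * ((q - q') + (r - r'))| + |b * b * (w - w')| :=
        abs_add_three _ _ _
    _ ≤ |a| * |a| * (ε * s * s) + |a| * |b| * (ε * s * u + ε * u * s) +
          |b| * |b| * (ε * u * u) := by
        simp only [abs_mul]
        gcongr
        exact (abs_add_le _ _).trans (add_le_add hq hr)
    _ = ε * (|a| * s + |b| * u) ^ 2 := by ring

section CompactGroup

variable {G : Type*} [AddCommGroup G] [TopologicalSpace G] [IsTopologicalAddGroup G]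
  [CompactSpace G]

theorem exists_nhds_zero_abs_sub_le {g : G → ℝ} (hg : Continuous g) {ε : ℝ} (hε : 0 < ε) :
    ∃ V ∈ 𝓝 (0 : G), ∀ x y, x - y ∈ V → |g x - g y| ≤ ε := by
  let _ := IsTopologicalAddGroup.rightUniformSpace G
  have hunif := CompactSpace.uniformContinuous_of_continuous hg (Metric.dist_mem_uniformity hε)
  obtain ⟨V, hV, hVsub⟩ := mem_comap.1 hunif
  refine ⟨V, hV, fun x y hxy => ?_⟩
  have : dist (g y) (g x) < ε := hVsub (show (y, x) ∈ _ by simpa [sub_eq_add_neg] using hxy)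
  rw [dist_comm, Real.dist_eq] at this
  exact this.le

variable [MeasurableSpace G]

theorem exists_measurable_fin_approx_sub [OpensMeasurableSpace G] {g : G → ℝ} (hg : Continuous g)
    {ε : ℝ} (hε : 0 < ε) :
    ∃ (N : ℕ) (t : Fin N → G) (π : G → Fin N), Measurable π ∧
      ∀ x y, |g (x - y) - g (t (π x) - t (π y))| ≤ ε := by
  obtain ⟨V, hV, hVg⟩ := exists_nhds_zero_abs_sub_le hg hε
  obtain ⟨W, hW, hWV⟩ := exists_nhds_half_neg hV
  obtain ⟨N, t, π, hπ, hxπ⟩ := exists_measurable_fin_index_mem_of_isOpen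
    (fun x => (· - x) ⁻¹' interior W) (fun x => isOpen_interior.preimage (continuous_sub_right x))
    (fun x => by simpa using mem_interior_iff_mem_nhds.2 hW)
  refine ⟨N, t, π, hπ, fun x y => hVg _ _ ?_⟩
  rw [sub_sub_sub_comm]
  exact hWV _ (interior_subset (hxπ x)) _ (interior_subset (hxπ y))

theorem abs_mutualEnergy_sub_sum_le [OpensMeasurableSpace G] {g : G → ℝ} (hg : Continuous g)
    (σ τ : Measure G)
    [IsFiniteMeasure σ] [IsFiniteMeasure τ] {N : ℕ} {t : Fin N → G} {π : G → Fin N}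
    (hπ : Measurable π) {ε : ℝ} (happrox : ∀ x y, |g (x - y) - g (t (π x) - t (π y))| ≤ ε) :
    |mutualEnergy g σ τ - ∑ i, ∑ j, σ.real (π ⁻¹' {i}) * τ.real (π ⁻¹' {j}) * g (t i - t j)| ≤
      ε * σ.real univ * τ.real univ := by
  obtain ⟨C, hC⟩ := isCompact_univ.exists_bound_of_continuousOn hg.continuousOn
  -- `G` need not be second countable, so the Borel σ-algebra of `G × G` may be larger than the
  -- product σ-algebra; compactness of the support is what gives product measurability here.
  have hint : Integrable (fun p : G × G => g (p.2 - p.1)) (τ.prod σ) :=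
    .of_bound (HasCompactSupport.stronglyMeasurable_of_prod (by fun_prop)
      (.of_compactSpace _)).aestronglyMeasurable C (ae_of_all _ fun p => hC _ (mem_univ _))
  have hint' : Integrable (fun p : G × G => g (t (π p.2) - t (π p.1))) (τ.prod σ) :=
    .of_bound ((measurable_of_finite fun p : Fin N × Fin N => g (t p.2 - t p.1)).comp
      (hπ.prodMap hπ)).aestronglyMeasurable C (ae_of_all _ fun p => hC _ (mem_univ _))
  rw [← integral_integral_comp_eq_sum hπ (fun i j => g (t i - t j)), mutualEnergy,
    integral_integral (f := fun y x => g (x - y)) hint,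
    integral_integral (f := fun y x => g (t (π x) - t (π y))) hint', ← integral_sub hint hint']
  rw [← Real.norm_eq_abs]
  calc _ ≤ ε * (τ.prod σ).real univ :=
        norm_integral_le_of_norm_le_const (ae_of_all _ fun p => (happrox p.2 p.1 :))
    _ = ε * σ.real univ * τ.real univ := by
        rw [← univ_prod_univ, measureReal_prod_prod]; ring

theorem IsPosDefFn.mutualEnergy_quadratic_nonneg [OpensMeasurableSpace G] {f : G → ℂ}
    (hf : IsPosDefFn f) (hc : Continuous f) (σ τ : Measure G) [IsFiniteMeasure σ]
    [IsFiniteMeasure τ] (a b : ℝ) :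
    0 ≤ a * a * mutualEnergy (re ∘ f) σ σ +
      a * b * (mutualEnergy (re ∘ f) σ τ + mutualEnergy (re ∘ f) τ σ) +
      b * b * mutualEnergy (re ∘ f) τ τ := by
  set E := mutualEnergy (re ∘ f)
  set M := (|a| * σ.real univ + |b| * τ.real univ) ^ 2
  refine le_of_forall_pos_le_add fun δ hδ => ?_
  set ε := δ / (M + 1)
  obtain ⟨N, t, π, hπ, happrox⟩ :=
    exists_measurable_fin_approx_sub (continuous_re.comp hc) (ε := ε) (by positivity)
  let S (ρ ρ' : Measure G) : ℝ :=
    ∑ i, ∑ j, ρ.real (π ⁻¹' {i}) * ρ'.real (π ⁻¹' {j}) * (f (t i - t j)).re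
  have hS : 0 ≤ a * a * S σ σ + a * b * (S σ τ + S τ σ) + b * b * S τ τ := by
    convert hf.re_sum_nonneg t (fun i => a * σ.real (π ⁻¹' {i}) + b * τ.real (π ⁻¹' {i}))
      using 1
    simp only [S, Finset.mul_sum, ← Finset.sum_add_distrib]
    exact Finset.sum_congr rfl fun i _ => Finset.sum_congr rfl fun j _ => by ring
  have happ (ρ ρ' : Measure G) [IsFiniteMeasure ρ] [IsFiniteMeasure ρ'] :
      |E ρ ρ' - S ρ ρ'| ≤ ε * ρ.real univ * ρ'.real univ :=
    abs_mutualEnergy_sub_sum_le (continuous_re.comp hc) ρ ρ' hπ happrox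
  have herr := abs_quadratic_sub_le a b (happ σ σ) (happ σ τ) (happ τ σ) (happ τ τ)
  have hεM : ε * M ≤ δ := by
    rw [div_mul_eq_mul_div, div_le_iff₀ (by positivity)]
    nlinarith
  linarith [(abs_le.1 herr).1]

theorem mutualEnergy_eq_of_isAddRightInvariant_right [BorelSpace G] {g : G → ℝ}
    (hg : Continuous g) (hg_neg : ∀ x, g (-x) = g x) (μ : Measure G) [IsFiniteMeasure μ]
    [μ.IsAddRightInvariant] (ν : Measure G) [IsFiniteMeasure ν] :
    mutualEnergy g ν μ = ν.real univ * ∫ x, g x ∂μ := by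
  rw [mutualEnergy, integral_integral_swap_of_hasCompactSupport (f := fun y x => g (x - y))
    (by fun_prop) (.of_compactSpace _)]
  have hinner (x : G) : ∫ y, g (x - y) ∂μ = ∫ y, g y ∂μ :=
    calc ∫ y, g (x - y) ∂μ = ∫ y, g (y - x) ∂μ := by congr 1 with y; rw [← neg_sub, hg_neg]
      _ = ∫ y, g y ∂μ := integral_sub_right_eq_self g x
  simp_rw [hinner, integral_const, smul_eq_mul]

theorem mutualEnergy_map [OpensMeasurableSpace G] {H : Type*} [AddGroup H] [MeasurableSpace H]
    {g : G → ℝ} (hg : Continuous g) {φ : H →+ G} (hφ : Measurable φ) (σ τ : Measure H)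
    [IsFiniteMeasure σ] :
    mutualEnergy g (σ.map φ) (τ.map φ) = mutualEnergy (g ∘ φ) σ τ := by
  have houter : StronglyMeasurable fun y => ∫ x, g (x - y) ∂σ.map φ :=
    (HasCompactSupport.stronglyMeasurable_of_prod (f := fun p : G × G => g (p.2 - p.1))
      (by fun_prop) (.of_compactSpace _)).integral_prod_right'
  rw [mutualEnergy, integral_map hφ.aemeasurable houter.aestronglyMeasurable, mutualEnergy]
  congr 1 with y
  rw [integral_map (f := fun x => g (x - φ y)) hφ.aemeasurable
    (hg.comp (continuous_sub_right _)).aestronglyMeasurable]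
  simp [map_sub]

theorem IsPosDefFn.sq_measureReal_mul_integral_le_mutualEnergy [BorelSpace G] {f : G → ℂ}
    (hf : IsPosDefFn f) (hc : Continuous f) (μ : Measure G) [μ.IsAddHaarMeasure] (ν : Measure G)
    [IsFiniteMeasure ν] :
    ν.real univ ^ 2 * ∫ x, (f x).re ∂μ ≤ μ.real univ * mutualEnergy (re ∘ f) ν ν := by
  have hQ := hf.mutualEnergy_quadratic_nonneg hc μ ν (ν.real univ) (-μ.real univ)
  rw [mutualEnergy_eq_of_isAddRightInvariant_left,
    mutualEnergy_eq_of_isAddRightInvariant_left,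
    mutualEnergy_eq_of_isAddRightInvariant_right (continuous_re.comp hc) hf.re_neg] at hQ
  have hμ : 0 < μ.real univ := measureReal_univ_pos
  have hQ' : 0 ≤ μ.real univ * (μ.real univ * mutualEnergy (re ∘ f) ν ν -
      ν.real univ ^ 2 * ∫ x, (f x).re ∂μ) := by
    convert hQ using 1
    simp only [Function.comp_apply]
    ring
  linarith [nonneg_of_mul_nonneg_right hQ' hμ]

theorem IsPosDefFn.measureReal_mul_integral_re_le_of_addMonoidHom [BorelSpace G] {f : G → ℂ}
    (hf : IsPosDefFn f) (hc : Continuous f) (μG : Measure G) [μG.IsAddHaarMeasure]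
    {H : Type*} [AddCommGroup H] [TopologicalSpace H] [IsTopologicalAddGroup H] [CompactSpace H]
    [MeasurableSpace H] [BorelSpace H] {φ : H →+ G} (hφ : Continuous φ) (μH : Measure H)
    [μH.IsAddHaarMeasure] :
    μH.real univ * (∫ x, f x ∂μG).re ≤ μG.real univ * (∫ y, f (φ y) ∂μH).re := by
  have key := hf.sq_measureReal_mul_integral_le_mutualEnergy hc μG (μH.map φ)
  rw [map_measureReal_apply hφ.measurable MeasurableSet.univ, preimage_univ,
    mutualEnergy_map (continuous_re.comp hc) hφ.measurable,
    mutualEnergy_eq_of_isAddRightInvariant_left] at key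
  have hG := integral_re (μ := μG) (hc.integrable_of_hasCompactSupport (.of_compactSpace _))
  have hH := integral_re (μ := μH)
    ((hc.comp hφ).integrable_of_hasCompactSupport (.of_compactSpace _))
  simp only [RCLike.re_to_complex, Function.comp_apply] at hG hH key
  rw [← hG, ← hH]
  have hμH : 0 < μH.real univ := measureReal_univ_pos
  nlinarith

end CompactGroup

theorem ofReal_div_le_div_mul_ofReal_div {a b : ℝ≥0∞} (ha : a ≠ ∞) (hb : b ≠ 0)
    (hb' : b ≠ ∞) {x y c : ℝ} (hc : 0 ≤ c) (h : b.toReal * x ≤ a.toReal * y) :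
    ENNReal.ofReal (x / c) ≤ a / b * ENNReal.ofReal (y / c) := by
  have hb₀ : 0 < b.toReal := ENNReal.toReal_pos hb hb'
  calc ENNReal.ofReal (x / c) ≤ ENNReal.ofReal (a.toReal / b.toReal * (y / c)) := by
        refine ENNReal.ofReal_le_ofReal ?_
        exact (div_le_div_of_nonneg_right ((le_div_iff₀' hb₀).2 h) hc).trans_eq (by ring)
    _ = a / b * ENNReal.ofReal (y / c) := by
        rw [ENNReal.ofReal_mul (by positivity), ENNReal.ofReal_div_of_pos hb₀,
          ENNReal.ofReal_toReal ha, ENNReal.ofReal_toReal hb']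

theorem turanConst_le_of_subgroup_general
    {G : Type*} [AddCommGroup G] [TopologicalSpace G] [IsTopologicalAddGroup G]
    [CompactSpace G] [MeasurableSpace G] [BorelSpace G]
    (μG : Measure G) [μG.IsAddHaarMeasure]
    (K : AddSubgroup G) (hK : IsClosed (K : Set G))
    [MeasurableSpace K] [BorelSpace K]
    (μK : Measure K) [μK.IsAddHaarMeasure]
    (Ω : Set G) :
    turanConst μG Ω ≤ (μG Set.univ / μK Set.univ) *
      turanConst μK ((Subtype.val : K → G) ⁻¹' Ω) := by
  have : CompactSpace K := isCompact_iff_compactSpace.mp hK.isCompact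
  refine sSup_le ?_
  rintro _ ⟨f, hc, hf, -, -, hfΩ, rfl⟩
  rcases hf.re_zero_nonneg.eq_or_lt with h0 | h0
  · simp [← h0] -- the ratio is the junk value `x / 0 = 0`
  have hrestrict : ENNReal.ofReal ((∫ k, (f ∘ K.subtype) k ∂μK).re / ((f ∘ K.subtype) 0).re) ≤
      turanConst μK (Subtype.val ⁻¹' Ω) :=
    le_sSup ⟨f ∘ K.subtype, hc.comp continuous_subtype_val, hf.comp_addMonoidHom K.subtype,
      fun h => h0.ne' (by simp [show f 0 = 0 by simpa using congrFun h 0]),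
      (isClosed_tsupport _).isCompact,
      (tsupport_comp_subset_preimage f continuous_subtype_val).trans (preimage_mono hfΩ), rfl⟩
  calc ENNReal.ofReal ((∫ x, f x ∂μG).re / (f 0).re)
      ≤ μG univ / μK univ * ENNReal.ofReal ((∫ k, f k ∂μK).re / (f 0).re) :=
        ofReal_div_le_div_mul_ofReal_div (measure_ne_top _ _) (NeZero.ne _)
          (measure_ne_top _ _) h0.le
          (hf.measureReal_mul_integral_re_le_of_addMonoidHom hc μG (φ := K.subtype)
            continuous_subtype_val μK)
    _ ≤ _ := by simpa using mul_le_mul_right hrestrict _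

theorem turanConst_le_of_subgroup
    {G : Type*} [AddCommGroup G] [TopologicalSpace G] [IsTopologicalAddGroup G]
    [CompactSpace G] [T2Space G] [MeasurableSpace G] [BorelSpace G]
    (μG : Measure G) [μG.IsAddHaarMeasure]
    (K : AddSubgroup G) (hK : IsClosed (K : Set G))
    [MeasurableSpace K] [BorelSpace K]
    (μK : Measure K) [μK.IsAddHaarMeasure]
    (Ω : Set G) (hΩopen : IsOpen Ω) (hΩsym : Ω = -Ω) :
    turanConst μG Ω ≤ (μG Set.univ / μK Set.univ) *
      turanConst μK ((Subtype.val : K → G) ⁻¹' Ω) :=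
  turanConst_le_of_subgroup_general μG K hK μK Ω
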